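/- Let (W,S) be a Coxeter system and let M be an H-module with basis X supporting a W-digraph Γ. Let v = Σ_{γ ∈ X} λ_γ γ ∈ M and s ∈ S. Then: (i) T_s·v = u²v if and only if λ_β = λ_α whenever Γ has an edge (solid or dashed) from α to β labeled s; (ii) T_s·v = −v if and only if λ_β = −u^{-2}λ_α whenever Γ has a solid edge from α to β labeled s, and λ_β = −(u+1)(u²−u)^{-1}λ_α whenever Γ has a dashed edge from α to β labeled s. -/

import Mathlib

/-!
Every vertex lies on exactly one `s`-edge, so `T_s` preserves the span of the two endpoints of
each `s`-edge and acts there by a `2 × 2` matrix determined by the type of the edge. Hence `v` is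
an eigenvector of `T_s` iff the pair of its coefficients on every `s`-edge is an eigenvector of the
corresponding block. Both blocks have eigenvalues `u²` and `-1`, each with a one-dimensional
eigenspace, and these lines give the stated relations between `λ_α` and `λ_β`.
-/

open Finsupp

set_option synthInstance.maxHeartbeats 1000000
set_option maxHeartbeats 1000000

noncomputable section

/-- The field `ℚ(u)` of rational functions. -/
abbrev Kq : Type := RatFunc ℚ

/-- The indeterminate `u`. -/
def uu : Kq := RatFunc.X

/-- An `S`-labeled digraph on vertex type `V` with labels in `B`:
`Edge a b s d` means there is an edge from `a` to `b` labeled `s`, which is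
dashed if `d = true` and solid if `d = false`.  There are no loops, and every
vertex occurs in exactly one edge with any given label. -/
structure SLabeledDigraph (V B : Type*) where
  Edge : V → V → B → Bool → Prop
  no_loop : ∀ v s d, ¬ Edge v v s d
  unique_edge : ∀ v s, ∃! e : V × V × Bool,
    (e.1 = v ∨ e.2.1 = v) ∧ Edge e.1 e.2.1 s e.2.2

namespace SLabeledDigraph

variable {V B : Type*} (Γ : SLabeledDigraph V B)

/-- Swap the endpoints of an edge datum. -/
def eswap {V : Type*} (e : V × V × Bool) : V × V × Bool := (e.2.1, e.1, e.2.2)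

/-- The reversed digraph `Γ_rev`, with all edge directions reversed but types
and labels kept. -/
def rev : SLabeledDigraph V B where
  Edge a b s d := Γ.Edge b a s d
  no_loop v s d := Γ.no_loop v s d
  unique_edge v s := by
    obtain ⟨e, ⟨hinc, hedge⟩, huniq⟩ := Γ.unique_edge v s
    refine ⟨eswap e, ⟨Or.symm hinc, hedge⟩, ?_⟩
    rintro e' ⟨hinc', hedge'⟩
    have h1 : eswap e' = e := huniq (eswap e') ⟨Or.symm hinc', hedge'⟩
    calc e' = eswap (eswap e') := rfl
    _ = eswap e := by rw [h1]

/-- The restriction `Γ_J`: same vertices, only edges with labels in `J`. -/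
def restrict (J : Set B) : SLabeledDigraph V J where
  Edge a b s d := Γ.Edge a b s.1 d
  no_loop v s d := Γ.no_loop v s.1 d
  unique_edge v s := Γ.unique_edge v s.1

/-- Directed adjacency (ignoring labels and edge types). -/
def DAdj (a b : V) : Prop := ∃ s d, Γ.Edge a b s d

/-- Undirected adjacency. -/
def UAdj (a b : V) : Prop := Γ.DAdj a b ∨ Γ.DAdj b a

/-- `Γ` is connected if any two vertices are joined by an undirected path. -/
def Connected : Prop := ∀ a b : V, Relation.ReflTransGen Γ.UAdj a b

/-- A source is a vertex at which no edge ends. -/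
def IsSource (a : V) : Prop := ∀ b s d, ¬ Γ.Edge b a s d

/-- A sink is a vertex at which no edge begins. -/
def IsSink (a : V) : Prop := ∀ b s d, ¬ Γ.Edge a b s d

/-- `Γ` is acyclic if it has no nonempty directed circuit. -/
def Acyclic : Prop := ∀ a : V, ¬ Relation.TransGen Γ.DAdj a a

/-- The setoid whose classes are the connected components of `Γ`. -/
def compSetoid : Setoid V :=
  ⟨Relation.ReflTransGen Γ.UAdj,
    ⟨fun _ => Relation.ReflTransGen.refl,
     fun h => (letI : Std.Symm Γ.UAdj := ⟨fun _ _ hab => Or.symm hab⟩; Std.Symm.symm _ _ h),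
     fun h1 h2 => Relation.ReflTransGen.trans h1 h2⟩⟩

end SLabeledDigraph

/-- The Hecke algebra of a Coxeter system over `ℚ(u)`: an associative
`ℚ(u)`-algebra `H` with basis `{T_w : w ∈ W}` such that `T_1 = 1` and
`T_s T_w = T_{sw}` if `ℓ(sw) > ℓ(w)`, while
`T_s T_w = u² T_{sw} + (u² - 1) T_w` if `ℓ(sw) < ℓ(w)`. -/
structure HeckeAlgebra {B W : Type*} [Group W] {M : CoxeterMatrix B}
    (cs : CoxeterSystem M W) (H : Type*) [Ring H] [Algebra Kq H] where
  T : W → H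
  basis : Module.Basis W Kq H
  basis_eq : ∀ w, basis w = T w
  T_one : T 1 = 1
  T_mul_of_lt : ∀ (i : B) (w : W), cs.length w < cs.length (cs.simple i * w) →
    T (cs.simple i) * T w = T (cs.simple i * w)
  T_mul_of_gt : ∀ (i : B) (w : W), cs.length (cs.simple i * w) < cs.length w →
    T (cs.simple i) * T w = (uu ^ 2) • T (cs.simple i * w) + (uu ^ 2 - 1) • T w

variable {B W : Type*} [Group W] {M : CoxeterMatrix B}
variable {H : Type*} [Ring H] [Algebra Kq H]

/-- `ρ` is the representation of `H` on `M(Γ)` (the `ℚ(u)`-vector space with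
basis the vertices of `Γ`) in which each `T_s` acts by the operator `τ_s`
determined by the edges of `Γ`. -/
def WDigraphRep {V : Type*} (cs : CoxeterSystem M W) (ha : HeckeAlgebra cs H)
    (Γ : SLabeledDigraph V B)
    (ρ : H →ₐ[Kq] Module.End Kq (V →₀ Kq)) : Prop :=
  ∀ (a b : V) (i : B),
    (Γ.Edge a b i false →
      ρ (ha.T (cs.simple i)) (single a (1 : Kq)) = single b (1 : Kq) ∧
      ρ (ha.T (cs.simple i)) (single b (1 : Kq))
        = (uu ^ 2 - 1) • single b (1 : Kq) + (uu ^ 2) • single a (1 : Kq)) ∧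
    (Γ.Edge a b i true →
      ρ (ha.T (cs.simple i)) (single a (1 : Kq)) = uu • single a (1 : Kq) + (uu + 1) • single b (1 : Kq) ∧
      ρ (ha.T (cs.simple i)) (single b (1 : Kq))
        = (uu ^ 2 - uu - 1) • single b (1 : Kq) + (uu ^ 2 - uu) • single a (1 : Kq))

/-- `Γ` is a `W`-digraph: the assignment `T_s ↦ τ_s` extends to a
representation of `H` on `M(Γ)`. -/
def IsWDigraph {V : Type*} (cs : CoxeterSystem M W) (ha : HeckeAlgebra cs H)
    (Γ : SLabeledDigraph V B) : Prop :=
  ∃ ρ : H →ₐ[Kq] Module.End Kq (V →₀ Kq), WDigraphRep cs ha Γ ρ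


lemma uu_ne_zero : uu ≠ 0 := RatFunc.X_ne_zero

lemma uu_sub_one_ne_zero : uu - 1 ≠ 0 := by
  simpa [uu] using RatFunc.algebraMap_ne_zero (Polynomial.X_sub_C_ne_zero (1 : ℚ))

lemma uu_sq_sub_uu_ne_zero : uu ^ 2 - uu ≠ 0 := by
  rw [sq, ← mul_sub_one]
  exact mul_ne_zero uu_ne_zero uu_sub_one_ne_zero

namespace SLabeledDigraph

variable {V B : Type*} (Γ : SLabeledDigraph V B)

lemma ne_of_edge {a b : V} {s : B} {d : Bool} (h : Γ.Edge a b s d) : a ≠ b :=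
  fun hab => Γ.no_loop a s d (hab ▸ h)

lemma exists_edge_of_mem (c : V) (s : B) : ∃ a b d, Γ.Edge a b s d ∧ (c = a ∨ c = b) := by
  obtain ⟨⟨a, b, d⟩, ⟨hc, h⟩, -⟩ := Γ.unique_edge c s
  exact ⟨a, b, d, h, hc.imp Eq.symm Eq.symm⟩

lemma edge_eq_of_mem {a b p q c : V} {s : B} {d e : Bool}
    (hab : Γ.Edge a b s d) (hpq : Γ.Edge p q s e)
    (hc : c = a ∨ c = b) (hc' : c = p ∨ c = q) : p = a ∧ q = b := by
  obtain ⟨E, -, huniq⟩ := Γ.unique_edge c s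
  have h : ((p, q, e) : V × V × Bool) = (a, b, d) :=
    (huniq _ ⟨hc'.imp Eq.symm Eq.symm, hpq⟩).trans (huniq _ ⟨hc.imp Eq.symm Eq.symm, hab⟩).symm
  simp only [Prod.mk.injEq] at h
  exact ⟨h.1, h.2.1⟩

lemma finsupp_ext_iff {R : Type*} [Zero R] (s : B) {f g : V →₀ R} :
    f = g ↔ ∀ a b d, Γ.Edge a b s d → f a = g a ∧ f b = g b := by
  refine ⟨fun h a b d _ => ⟨by rw [h], by rw [h]⟩, fun h => Finsupp.ext fun c => ?_⟩
  obtain ⟨a, b, d, hab, rfl | rfl⟩ := Γ.exists_edge_of_mem c s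
  exacts [(h _ _ d hab).1, (h _ _ d hab).2]

end SLabeledDigraph

section WDigraphRep

variable {V : Type*} {cs : CoxeterSystem M W} {ha : HeckeAlgebra cs H}
  {Γ : SLabeledDigraph V B} {ρ : H →ₐ[Kq] Module.End Kq (V →₀ Kq)}

lemma WDigraphRep.exists_apply_single_eq_add (hρ : WDigraphRep cs ha Γ ρ) {a b x : V} {i : B}
    {d : Bool} (hab : Γ.Edge a b i d) (hx : x = a ∨ x = b) :
    ∃ α β : Kq, ρ (ha.T (cs.simple i)) (single x 1) = α • single a 1 + β • single b 1 := by
  cases d <;> rcases hx with rfl | rfl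
  · exact ⟨0, 1, by rw [((hρ _ _ i).1 hab).1, zero_smul, zero_add, one_smul]⟩
  · exact ⟨uu ^ 2, uu ^ 2 - 1, by rw [((hρ _ _ i).1 hab).2, add_comm]⟩
  · exact ⟨_, _, ((hρ _ _ i).2 hab).1⟩
  · exact ⟨uu ^ 2 - uu, uu ^ 2 - uu - 1, by rw [((hρ _ _ i).2 hab).2, add_comm]⟩

lemma WDigraphRep.apply_single_apply_eq_zero (hρ : WDigraphRep cs ha Γ ρ) {a b c x : V} {i : B}
    {d : Bool} (hab : Γ.Edge a b i d) (hc : c = a ∨ c = b) (hxa : x ≠ a) (hxb : x ≠ b) :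
    ρ (ha.T (cs.simple i)) (single x 1) c = 0 := by
  obtain ⟨p, q, e, hpq, hx⟩ := Γ.exists_edge_of_mem x i
  obtain ⟨α, β, hαβ⟩ := hρ.exists_apply_single_eq_add hpq hx
  have hc' : ¬(c = p ∨ c = q) := fun hc' => by
    obtain ⟨rfl, rfl⟩ := Γ.edge_eq_of_mem hab hpq hc hc'
    exact hx.elim hxa hxb
  rw [not_or] at hc'
  simp [hαβ, Ne.symm hc'.1, Ne.symm hc'.2]

lemma WDigraphRep.apply_apply_of_edge (hρ : WDigraphRep cs ha Γ ρ) {a b c : V} {i : B}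
    {d : Bool} (hab : Γ.Edge a b i d) (hc : c = a ∨ c = b) (v : V →₀ Kq) :
    ρ (ha.T (cs.simple i)) v c =
      v a * ρ (ha.T (cs.simple i)) (single a 1) c +
        v b * ρ (ha.T (cs.simple i)) (single b 1) c := by
  induction v using Finsupp.induction_linear with
  | zero => simp
  | add f g hf hg => simp only [map_add, Finsupp.add_apply, hf, hg]; ring
  | single x r =>
    rw [← smul_single_one, map_smul, Finsupp.smul_apply, smul_eq_mul]
    by_cases hxa : x = a
    · simp [hxa, Γ.ne_of_edge hab]
    by_cases hxb : x = b
    · simp [hxb, Ne.symm (Γ.ne_of_edge hab)]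
    simp [hρ.apply_single_apply_eq_zero hab hc hxa hxb, Ne.symm hxa, Ne.symm hxb]

lemma WDigraphRep.apply_of_solid (hρ : WDigraphRep cs ha Γ ρ) {a b : V} {i : B}
    (hab : Γ.Edge a b i false) (v : V →₀ Kq) :
    ρ (ha.T (cs.simple i)) v a = uu ^ 2 * v b ∧
      ρ (ha.T (cs.simple i)) v b = v a + (uu ^ 2 - 1) * v b := by
  obtain ⟨hTa, hTb⟩ := (hρ a b i).1 hab
  have hne := Γ.ne_of_edge hab
  simp only [hρ.apply_apply_of_edge hab (.inl rfl), hρ.apply_apply_of_edge hab (.inr rfl), hTa, hTb,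
    Finsupp.add_apply, Finsupp.smul_apply, single_eq_same, single_eq_of_ne hne,
    single_eq_of_ne hne.symm, smul_eq_mul]
  constructor <;> ring

lemma WDigraphRep.apply_of_dashed (hρ : WDigraphRep cs ha Γ ρ) {a b : V} {i : B}
    (hab : Γ.Edge a b i true) (v : V →₀ Kq) :
    ρ (ha.T (cs.simple i)) v a = uu * v a + (uu ^ 2 - uu) * v b ∧
      ρ (ha.T (cs.simple i)) v b = (uu + 1) * v a + (uu ^ 2 - uu - 1) * v b := by
  obtain ⟨hTa, hTb⟩ := (hρ a b i).2 hab
  have hne := Γ.ne_of_edge hab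
  simp only [hρ.apply_apply_of_edge hab (.inl rfl), hρ.apply_apply_of_edge hab (.inr rfl), hTa, hTb,
    Finsupp.add_apply, Finsupp.smul_apply, single_eq_same, single_eq_of_ne hne,
    single_eq_of_ne hne.symm, smul_eq_mul]
  constructor <;> ring

lemma WDigraphRep.apply_eq_smul_iff (hρ : WDigraphRep cs ha Γ ρ) (v : V →₀ Kq) (i : B) (μ : Kq) :
    ρ (ha.T (cs.simple i)) v = μ • v ↔
      ∀ a b, (Γ.Edge a b i false →
          uu ^ 2 * v b = μ * v a ∧ v a + (uu ^ 2 - 1) * v b = μ * v b) ∧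
        (Γ.Edge a b i true →
          uu * v a + (uu ^ 2 - uu) * v b = μ * v a ∧
            (uu + 1) * v a + (uu ^ 2 - uu - 1) * v b = μ * v b) := by
  rw [Γ.finsupp_ext_iff i]
  refine forall₂_congr fun a b => ?_
  rw [Bool.forall_bool]
  refine and_congr (forall_congr' fun hab => ?_) (forall_congr' fun hab => ?_)
  · rw [Finsupp.smul_apply, Finsupp.smul_apply, (hρ.apply_of_solid hab v).1,
      (hρ.apply_of_solid hab v).2, smul_eq_mul, smul_eq_mul]
  · rw [Finsupp.smul_apply, Finsupp.smul_apply, (hρ.apply_of_dashed hab v).1,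
      (hρ.apply_of_dashed hab v).2, smul_eq_mul, smul_eq_mul]

end WDigraphRep

lemma solid_eigen_sq_iff (x y : Kq) :
    (uu ^ 2 * y = uu ^ 2 * x ∧ x + (uu ^ 2 - 1) * y = uu ^ 2 * y) ↔ y = x := by
  refine ⟨fun h => mul_left_cancel₀ (pow_ne_zero 2 uu_ne_zero) h.1, ?_⟩
  rintro rfl
  constructor <;> ring

lemma dashed_eigen_sq_iff (x y : Kq) :
    (uu * x + (uu ^ 2 - uu) * y = uu ^ 2 * x ∧
      (uu + 1) * x + (uu ^ 2 - uu - 1) * y = uu ^ 2 * y) ↔ y = x := by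
  refine ⟨fun h => mul_left_cancel₀ uu_sq_sub_uu_ne_zero (by linear_combination h.1), ?_⟩
  rintro rfl
  constructor <;> ring

lemma solid_eigen_neg_one_iff (x y : Kq) :
    (uu ^ 2 * y = -1 * x ∧ x + (uu ^ 2 - 1) * y = -1 * y) ↔ y = -(uu ^ 2)⁻¹ * x := by
  rw [show -(uu ^ 2)⁻¹ * x = (uu ^ 2)⁻¹ * (-1 * x) by ring,
    eq_inv_mul_iff_mul_eq₀ (pow_ne_zero 2 uu_ne_zero)]
  exact ⟨And.left, fun h => ⟨h, by linear_combination h⟩⟩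

lemma dashed_eigen_neg_one_iff (x y : Kq) :
    (uu * x + (uu ^ 2 - uu) * y = -1 * x ∧
      (uu + 1) * x + (uu ^ 2 - uu - 1) * y = -1 * y) ↔
      y = -(uu + 1) * (uu ^ 2 - uu)⁻¹ * x := by
  rw [show -(uu + 1) * (uu ^ 2 - uu)⁻¹ * x = (uu ^ 2 - uu)⁻¹ * (-(uu + 1) * x) by ring,
    eq_inv_mul_iff_mul_eq₀ uu_sq_sub_uu_ne_zero]
  exact ⟨fun h => by linear_combination h.1,
    fun h => ⟨by linear_combination h, by linear_combination h⟩⟩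

/-- Lemma `eigenvalues`.  Let `M(Γ)` be the `H`-module with
basis the vertex set `X` of the `W`-digraph `Γ`, let
`v = Σ_{γ ∈ X} λ_γ γ` (so `λ_γ = v γ`), and let `s ∈ S`.  Then:
(i) `T_s v = u² v` iff `λ_β = λ_α` whenever `Γ` has an edge (solid or dashed)
from `α` to `β` labeled `s`;
(ii) `T_s v = -v` iff `λ_β = -u⁻² λ_α` for every solid edge `α → β` labeled
`s` and `λ_β = -(u+1)(u²-u)⁻¹ λ_α` for every dashed edge `α → β` labeled `s`. -/
theorem wdigraph_eigenvalue_conditions {V : Type*}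
    (cs : CoxeterSystem M W) (ha : HeckeAlgebra cs H)
    (Γ : SLabeledDigraph V B)
    (ρ : H →ₐ[Kq] Module.End Kq (V →₀ Kq)) (hρ : WDigraphRep cs ha Γ ρ)
    (v : V →₀ Kq) (i : B) :
    (ρ (ha.T (cs.simple i)) v = uu ^ 2 • v ↔
      ∀ (a b : V) (d : Bool), Γ.Edge a b i d → v b = v a) ∧
    (ρ (ha.T (cs.simple i)) v = - v ↔
      ∀ a b : V,
        (Γ.Edge a b i false → v b = - (uu ^ 2)⁻¹ * v a) ∧
        (Γ.Edge a b i true → v b = - (uu + 1) * (uu ^ 2 - uu)⁻¹ * v a)) := by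
  constructor
  · rw [hρ.apply_eq_smul_iff]
    simp only [Bool.forall_bool, solid_eigen_sq_iff, dashed_eigen_sq_iff]
  · rw [← neg_one_smul Kq v, hρ.apply_eq_smul_iff]
    simp only [solid_eigen_neg_one_iff, dashed_eigen_neg_one_iff]
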